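/- arXiv:1802.00059 — 2 statements merged into one kernel-verified Lean document; each statement's English description precedes it below -/
import Mathlib

section
/- Fix a finite tree t with ℓ vertices and a automorphisms, and a constant c > 0. In G(n, c/n), the expected number of connected components isomorphic to t is asymptotically (ℓ!/a)·c^{ℓ-1}·e^{-ℓc}·n/ℓ! = Θ(n) as n → ∞. -/
/-!
Count labelled copies instead of vertex sets. Call an embedding `φ : Fin ℓ ↪ Fin n` a component
embedding of `t` in `G` if it is an isomorphism from `t` onto the induced subgraph on its range and
no edge of `G` leaves that range. `Aut t` acts simply transitively on the component embeddings with
a given range, so the number of components isomorphic to `t` is `1/a` times the number of component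
embeddings. Whether `φ` is one depends only on the `C(n,2) - C(n-ℓ,2)` pairs meeting its range,
which must agree with the `ℓ - 1` edges of the copy `t.map φ`; by independence of the edges this
has probability `p^(ℓ-1) (1-p)^(C(n,2) - C(n-ℓ,2) - (ℓ-1))`. Summing over the `n(n-1)⋯(n-ℓ+1)`
embeddings and putting `p = c/n`, the expectation is `n c^(ℓ-1) e^(-ℓc) / a · (1 + o(1))`, since
`C(n,2) - C(n-ℓ,2) = ℓ n + O(1)`.
-/

open Filter Topology

/-- The probability weight of a specific outcome `g` (a choice of presence/absence for
each potential edge) in the Erdős–Rényi model `G(n,p)`. -/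
noncomputable def gnpWeight (n : ℕ) (p : ℝ) (g : Sym2 (Fin n) → Bool) : ℝ :=
  ∏ e : Sym2 (Fin n), (if g e then p else 1 - p)

/-- Expectation of a real-valued graph functional under `G(n,p)`. -/
noncomputable def gnpExp (n : ℕ) (p : ℝ) (f : (Sym2 (Fin n) → Bool) → ℝ) : ℝ :=
  ∑ g : Sym2 (Fin n) → Bool, gnpWeight n p g * f g

open Classical in
/-- Probability of an event under `G(n,p)`. -/
noncomputable def gnpProb (n : ℕ) (p : ℝ) (A : (Sym2 (Fin n) → Bool) → Prop) : ℝ :=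
  gnpExp n p (fun g => if A g then 1 else 0)

/-- The simple graph on `Fin n` determined by an outcome `g`. -/
def graphOf {n : ℕ} (g : Sym2 (Fin n) → Bool) : SimpleGraph (Fin n) where
  Adj i j := i ≠ j ∧ g s(i, j) = true
  symm := by
    constructor
    intro i j h
    refine ⟨Ne.symm h.1, ?_⟩
    rw [Sym2.eq_swap]
    exact h.2
  loopless := ⟨fun i h => h.1 rfl⟩

/-- `S` induces a connected component of `G` isomorphic to the graph `t`:
the induced subgraph on `S` is a copy of `t` and no edges leave `S`. -/
def IsCompCopy {n ℓ : ℕ} (t : SimpleGraph (Fin ℓ)) (G : SimpleGraph (Fin n))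
    (S : Finset (Fin n)) : Prop :=
  (∃ φ : Fin ℓ ↪ Fin n, Set.range φ = ↑S ∧
      ∀ i j, t.Adj i j ↔ G.Adj (φ i) (φ j)) ∧
  ∀ u ∈ S, ∀ v, G.Adj u v → v ∈ S

section Gnp

variable {n : ℕ} {p : ℝ}

lemma gnpExp_sum {ι : Type*} (s : Finset ι) (f : ι → (Sym2 (Fin n) → Bool) → ℝ) :
    gnpExp n p (fun g => ∑ i ∈ s, f i g) = ∑ i ∈ s, gnpExp n p (f i) := by
  simp only [gnpExp, Finset.mul_sum]
  exact Finset.sum_comm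

lemma gnpExp_div_const (f : (Sym2 (Fin n) → Bool) → ℝ) (r : ℝ) :
    gnpExp n p (fun g => f g / r) = gnpExp n p f / r := by
  simp only [gnpExp, Finset.sum_div, mul_div_assoc]

lemma gnpProb_congr {A B : (Sym2 (Fin n) → Bool) → Prop} (h : ∀ g, A g ↔ B g) :
    gnpProb n p A = gnpProb n p B := by
  rw [funext fun g => propext (h g)]

lemma gnpProb_forall_mem_eq (A : Finset (Sym2 (Fin n))) (b : Sym2 (Fin n) → Bool) :
    gnpProb n p (fun g => ∀ e ∈ A, g e = b e) = ∏ e ∈ A, (if b e then p else 1 - p) := by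
  classical
  have hfiber : ∀ e, ∑ x : Bool, (if x then p else 1 - p) * (if e ∈ A → x = b e then 1 else 0) =
      if e ∈ A then (if b e then p else 1 - p) else 1 := by
    intro e
    by_cases he : e ∈ A <;> cases b e <;> simp [he]
  rw [← Fintype.prod_ite_mem, ← Finset.prod_congr rfl fun e _ => hfiber e, Fintype.prod_sum]
  refine Finset.sum_congr rfl fun g _ => ?_
  rw [Finset.prod_mul_distrib, Finset.prod_boole, gnpWeight]
  simp only [Finset.mem_univ, true_implies]
  congr

end Gnp

lemma Nat.choose_two_sub_choose_two_sub {n ℓ : ℕ} (h : ℓ ≤ n) :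
    n.choose 2 - (n - ℓ).choose 2 = ℓ * (n - ℓ) + ℓ.choose 2 := by
  obtain ⟨m, rfl⟩ := Nat.exists_eq_add_of_le' h
  have hsplit : (m + ℓ).choose 2 = m.choose 2 + (ℓ * m + ℓ.choose 2) := by
    simp [Nat.add_choose_eq, Finset.Nat.antidiagonal_succ]
    ring
  rw [Nat.add_sub_cancel, hsplit, Nat.add_sub_cancel_left]

section TouchingPairs

open Finset

variable {V : Type*} [DecidableEq V]

def offDiagPairs (s : Finset V) : Finset (Sym2 V) :=
  s.offDiag.image Sym2.mk.uncurry

lemma mk_mem_offDiagPairs {s : Finset V} {u v : V} :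
    s(u, v) ∈ offDiagPairs s ↔ u ∈ s ∧ v ∈ s ∧ u ≠ v := by
  simp only [offDiagPairs, mem_image, mem_offDiag, Prod.exists, Function.uncurry_apply_pair,
    Sym2.eq_iff]
  constructor
  · rintro ⟨x, y, ⟨hx, hy, hxy⟩, ⟨rfl, rfl⟩ | ⟨rfl, rfl⟩⟩
    exacts [⟨hx, hy, hxy⟩, ⟨hy, hx, hxy.symm⟩]
  · rintro ⟨hu, hv, huv⟩
    exact ⟨u, v, ⟨hu, hv, huv⟩, Or.inl ⟨rfl, rfl⟩⟩

variable [Fintype V]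

def touchingPairs (S : Finset V) : Finset (Sym2 V) :=
  offDiagPairs univ \ offDiagPairs Sᶜ

lemma mk_mem_touchingPairs {S : Finset V} {u v : V} :
    s(u, v) ∈ touchingPairs S ↔ u ≠ v ∧ (u ∈ S ∨ v ∈ S) := by
  unfold touchingPairs
  rw [Finset.mem_sdiff, mk_mem_offDiagPairs, mk_mem_offDiagPairs]
  simp only [mem_univ, mem_compl, true_and]
  tauto

lemma card_touchingPairs (S : Finset V) :
    #(touchingPairs S) = (Fintype.card V).choose 2 - (Fintype.card V - #S).choose 2 := by
  have hsub : offDiagPairs Sᶜ ⊆ offDiagPairs univ :=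
    image_subset_image (offDiag_mono (subset_univ _))
  rw [touchingPairs, card_sdiff_of_subset hsub, offDiagPairs, offDiagPairs,
    Sym2.card_image_offDiag, Sym2.card_image_offDiag, card_univ, card_compl]

end TouchingPairs

section ComponentEmbedding

variable {V W : Type*} (t : SimpleGraph W) (G : SimpleGraph V)

def IsComponentEmbedding (φ : W ↪ V) : Prop :=
  (∀ i j, t.Adj i j ↔ G.Adj (φ i) (φ j)) ∧ ∀ u ∈ Set.range φ, ∀ v, G.Adj u v → v ∈ Set.range φ

variable {t G}

lemma isComponentEmbedding_iff_adj_iff_map_adj {φ : W ↪ V} :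
    IsComponentEmbedding t G φ ↔
      ∀ u v, u ∈ Set.range φ ∨ v ∈ Set.range φ → (G.Adj u v ↔ (t.map φ).Adj u v) := by
  constructor
  · rintro ⟨hind, hclosed⟩ u v huv
    constructor
    · intro hG
      have hu : u ∈ Set.range φ := huv.elim id fun hv => hclosed v hv u hG.symm
      obtain ⟨i, rfl⟩ := hu
      obtain ⟨j, rfl⟩ := hclosed _ ⟨i, rfl⟩ v hG
      exact SimpleGraph.map_adj_apply.2 ((hind i j).2 hG)
    · intro hmap
      obtain ⟨i, j, hij, rfl, rfl⟩ := (SimpleGraph.map_adj _ _ _ _).1 hmap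
      exact (hind i j).1 hij
  · intro h
    refine ⟨fun i j => ?_, fun u hu v huv => ?_⟩
    · rw [h (φ i) (φ j) (Or.inl ⟨i, rfl⟩), SimpleGraph.map_adj_apply]
    · obtain ⟨i, j, -, -, rfl⟩ := (SimpleGraph.map_adj _ _ _ _).1 ((h u v (Or.inl hu)).1 huv)
      exact ⟨j, rfl⟩

lemma IsComponentEmbedding.comp_aut {φ : W ↪ V} (hφ : IsComponentEmbedding t G φ)
    (σ : t ≃g t) : IsComponentEmbedding t G (σ.toEquiv.toEmbedding.trans φ) := by
  have hrange : Set.range (σ.toEquiv.toEmbedding.trans φ) = Set.range φ :=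
    σ.toEquiv.surjective.range_comp φ
  refine ⟨fun i j => ?_, hrange ▸ hφ.2⟩
  rw [← σ.map_adj_iff]
  exact hφ.1 (σ i) (σ j)

lemma exists_equiv_comp_eq_of_range_eq {φ ψ : W ↪ V} (h : Set.range φ = Set.range ψ) :
    ∃ π : W ≃ W, ∀ i, ψ (π i) = φ i := by
  refine ⟨(Equiv.ofInjective φ φ.injective).trans
    ((Equiv.setCongr h).trans (Equiv.ofInjective ψ ψ.injective).symm), fun i => ?_⟩
  simp [Equiv.apply_ofInjective_symm]

lemma IsComponentEmbedding.card_range_eq {φ₀ : W ↪ V} (h₀ : IsComponentEmbedding t G φ₀) :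
    Nat.card {φ : W ↪ V // IsComponentEmbedding t G φ ∧ Set.range φ = Set.range φ₀} =
      Nat.card (t ≃g t) := by
  refine (Nat.card_eq_of_bijective
    (fun σ => ⟨σ.toEquiv.toEmbedding.trans φ₀, h₀.comp_aut σ, σ.toEquiv.surjective.range_comp φ₀⟩)
    ⟨fun σ τ hστ => ?_, fun ⟨φ, hφ, hrange⟩ => ?_⟩).symm
  · ext i
    exact φ₀.injective (DFunLike.congr_fun (congrArg Subtype.val hστ) i)
  · obtain ⟨π, hπ⟩ := exists_equiv_comp_eq_of_range_eq hrange
    have hadj : ∀ {i j}, t.Adj (π i) (π j) ↔ t.Adj i j := fun {i j} => by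
      rw [h₀.1, hφ.1, hπ, hπ]
    exact ⟨⟨π, hadj⟩, Subtype.ext (DFunLike.ext _ _ hπ)⟩

instance SimpleGraph.Iso.finite [Finite V] [Finite W] (G' : SimpleGraph W) : Finite (G ≃g G') :=
  Finite.of_injective _ RelIso.toEquiv_injective

end ComponentEmbedding

section Counting

open Finset

variable {n ℓ : ℕ} {t : SimpleGraph (Fin ℓ)} {G : SimpleGraph (Fin n)}

lemma isCompCopy_iff_exists_isComponentEmbedding {S : Finset (Fin n)} :
    IsCompCopy t G S ↔ ∃ φ : Fin ℓ ↪ Fin n, Set.range φ = S ∧ IsComponentEmbedding t G φ := by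
  constructor
  · rintro ⟨⟨φ, hrange, hind⟩, hclosed⟩
    refine ⟨φ, hrange, hind, ?_⟩
    simpa only [hrange, mem_coe] using hclosed
  · rintro ⟨φ, hrange, hind, hclosed⟩
    refine ⟨⟨φ, hrange, hind⟩, ?_⟩
    simpa only [hrange, mem_coe] using hclosed

lemma map_univ_eq_iff_range_eq {φ : Fin ℓ ↪ Fin n} {S : Finset (Fin n)} :
    univ.map φ = S ↔ Set.range φ = S := by
  rw [← coe_inj, coe_map, coe_univ, Set.image_univ]

lemma card_aut_mul_card_isCompCopy :
    Nat.card (t ≃g t) * Nat.card {S : Finset (Fin n) // IsCompCopy t G S} =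
      Nat.card {φ : Fin ℓ ↪ Fin n // IsComponentEmbedding t G φ} := by
  classical
  have hfiber : ∀ S ∈ ({S | IsCompCopy t G S} : Finset (Finset (Fin n))),
      #{φ ∈ {φ | IsComponentEmbedding t G φ} | univ.map φ = S} = Nat.card (t ≃g t) := by
    intro S hS
    rw [filter_filter]
    obtain ⟨φ₀, hrange₀, h₀⟩ := isCompCopy_iff_exists_isComponentEmbedding.1 (mem_filter.1 hS).2
    rw [← h₀.card_range_eq, ← Fintype.card_subtype, ← Nat.card_eq_fintype_card]
    simp only [map_univ_eq_iff_range_eq, hrange₀]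
  have hmaps : Set.MapsTo (fun φ : Fin ℓ ↪ Fin n => univ.map φ)
      ({φ | IsComponentEmbedding t G φ} : Finset _) ({S | IsCompCopy t G S} : Finset _) := by
    intro φ hφ
    simp only [coe_filter, mem_univ, true_and, Set.mem_ofPred_eq] at hφ ⊢
    exact isCompCopy_iff_exists_isComponentEmbedding.2 ⟨φ, map_univ_eq_iff_range_eq.1 rfl, hφ⟩
  rw [Nat.card_eq_fintype_card (α := {S // _}), Fintype.card_subtype,
    Nat.card_eq_fintype_card (α := {φ // _}), Fintype.card_subtype,
    card_eq_sum_card_fiberwise hmaps, sum_congr rfl hfiber, sum_const, smul_eq_mul, mul_comm]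

end Counting

section Probability

open Finset

variable {n ℓ : ℕ} {p : ℝ}

lemma forall_mem_touchingPairs_iff (g : Sym2 (Fin n) → Bool) (H : SimpleGraph (Fin n))
    [DecidableRel H.Adj] (S : Finset (Fin n)) :
    (∀ e ∈ touchingPairs S, g e = decide (e ∈ H.edgeFinset)) ↔
      ∀ u v, u ∈ S ∨ v ∈ S → ((graphOf g).Adj u v ↔ H.Adj u v) := by
  constructor
  · intro h u v huv
    by_cases huv' : u = v
    · subst huv'
      simp [graphOf]
    · have := h s(u, v) (mk_mem_touchingPairs.2 ⟨huv', huv⟩)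
      simp [graphOf, huv', this]
  · intro h e he
    induction e using Sym2.ind with
    | _ u v =>
      obtain ⟨huv', huv⟩ := mk_mem_touchingPairs.1 he
      have := h u v huv
      simp only [graphOf, huv', ne_eq, not_false_eq_true, true_and] at this
      simp [← this]

lemma gnpProb_forall_mem_eq_decide_mem_edgeFinset (H : SimpleGraph (Fin n)) [DecidableRel H.Adj]
    {A : Finset (Sym2 (Fin n))} (hA : H.edgeFinset ⊆ A) :
    gnpProb n p (fun g => ∀ e ∈ A, g e = decide (e ∈ H.edgeFinset)) =
      p ^ #H.edgeFinset * (1 - p) ^ (#A - #H.edgeFinset) := by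
  have hcard : #{e ∈ A | e ∉ H.edgeFinset} = #A - #H.edgeFinset := by
    rw [filter_not, filter_mem_eq_inter, inter_eq_right.2 hA, card_sdiff_of_subset hA]
  rw [gnpProb_forall_mem_eq]
  simp only [decide_eq_true_eq]
  rw [prod_ite, prod_const, prod_const, filter_mem_eq_inter, inter_eq_right.2 hA, hcard]

lemma edgeFinset_map_subset_touchingPairs (t : SimpleGraph (Fin ℓ)) (φ : Fin ℓ ↪ Fin n)
    [DecidableRel (t.map φ).Adj] :
    (t.map φ).edgeFinset ⊆ touchingPairs (univ.map φ) := by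
  intro e he
  induction e using Sym2.ind with
  | _ u v =>
    rw [SimpleGraph.mem_edgeFinset, SimpleGraph.mem_edgeSet] at he
    obtain ⟨i, j, -, rfl, rfl⟩ := (SimpleGraph.map_adj _ _ _ _).1 he
    exact mk_mem_touchingPairs.2 ⟨he.ne, Or.inl (mem_map_of_mem _ (mem_univ i))⟩

lemma gnpProb_isComponentEmbedding (t : SimpleGraph (Fin ℓ)) (φ : Fin ℓ ↪ Fin n) :
    gnpProb n p (fun g => IsComponentEmbedding t (graphOf g) φ) =
      p ^ t.edgeSet.ncard * (1 - p) ^ (n.choose 2 - (n - ℓ).choose 2 - t.edgeSet.ncard) := by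
  classical
  have hevent : ∀ g, IsComponentEmbedding t (graphOf g) φ ↔
      ∀ e ∈ touchingPairs (univ.map φ), g e = decide (e ∈ (t.map φ).edgeFinset) := by
    intro g
    rw [isComponentEmbedding_iff_adj_iff_map_adj, forall_mem_touchingPairs_iff]
    simp only [Finset.mem_map, mem_univ, true_and, Set.mem_range]
  have hedges : #(t.map φ).edgeFinset = t.edgeSet.ncard := by
    rw [← Set.ncard_coe_finset, SimpleGraph.coe_edgeFinset, SimpleGraph.edgeSet_map,
      Set.ncard_image_of_injective _ φ.sym2Map.injective]
  rw [gnpProb_congr hevent, gnpProb_forall_mem_eq_decide_mem_edgeFinset _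
    (edgeFinset_map_subset_touchingPairs t φ), card_touchingPairs, hedges, card_map, card_univ,
    Fintype.card_fin, Fintype.card_fin]

lemma gnpExp_card_isCompCopy (t : SimpleGraph (Fin ℓ)) :
    gnpExp n p (fun g => (Nat.card {S : Finset (Fin n) // IsCompCopy t (graphOf g) S} : ℝ)) =
      n.descFactorial ℓ / Nat.card (t ≃g t) *
        (p ^ t.edgeSet.ncard * (1 - p) ^ (n.choose 2 - (n - ℓ).choose 2 - t.edgeSet.ncard)) := by
  classical
  have haut : (Nat.card (t ≃g t) : ℝ) ≠ 0 := by
    have : Nonempty (t ≃g t) := ⟨.refl⟩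
    exact_mod_cast Nat.card_pos.ne'
  have hcount : ∀ g : Sym2 (Fin n) → Bool,
      (Nat.card {S : Finset (Fin n) // IsCompCopy t (graphOf g) S} : ℝ) =
        (∑ φ : Fin ℓ ↪ Fin n, if IsComponentEmbedding t (graphOf g) φ then 1 else 0) /
          Nat.card (t ≃g t) := by
    intro g
    rw [eq_div_iff haut, mul_comm, ← Nat.cast_mul, card_aut_mul_card_isCompCopy, sum_boole,
      Nat.card_eq_fintype_card, Fintype.card_subtype]
  have hprob := fun φ : Fin ℓ ↪ Fin n => gnpProb_isComponentEmbedding (p := p) t φ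
  unfold gnpProb at hprob
  simp only [hcount]
  rw [gnpExp_div_const, gnpExp_sum]
  simp only [hprob, sum_const, card_univ, Fintype.card_embedding_eq, Fintype.card_fin,
    nsmul_eq_mul]
  ring

end Probability

section Limits

open Finset

lemma tendsto_one_sub_div_natCast (c : ℝ) : Tendsto (fun n : ℕ => 1 - c / n) atTop (𝓝 1) := by
  simpa using (tendsto_const_div_atTop_nhds_zero_nat c).const_sub 1

lemma tendsto_descFactorial_div_pow (ℓ : ℕ) :
    Tendsto (fun n : ℕ => (n.descFactorial ℓ : ℝ) / (n : ℝ) ^ ℓ) atTop (𝓝 1) := by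
  have hprod : Tendsto (fun n : ℕ => ∏ i ∈ range ℓ, (1 - (i : ℝ) / n)) atTop (𝓝 1) := by
    simpa using tendsto_finsetProd (range ℓ) fun i _ =>
      (tendsto_const_div_atTop_nhds_zero_nat (i : ℝ)).const_sub 1
  refine hprod.congr' ?_
  filter_upwards [eventually_ge_atTop ℓ, eventually_gt_atTop 0] with n hℓn hn
  have hn' : (n : ℝ) ≠ 0 := by positivity
  have hpow : (n : ℝ) ^ ℓ = ∏ _i ∈ range ℓ, (n : ℝ) := by rw [prod_const, card_range]
  rw [Nat.descFactorial_eq_prod_range, Nat.cast_prod, hpow, ← prod_div_distrib]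
  refine prod_congr rfl fun i hi => ?_
  rw [Nat.cast_sub (by rw [mem_range] at hi; omega), sub_div, div_self hn']

lemma tendsto_one_sub_div_pow_sub (c : ℝ) (k : ℕ) :
    Tendsto (fun n : ℕ => (1 - c / n) ^ (n - k)) atTop (𝓝 (Real.exp (-c))) := by
  have hbase := tendsto_one_sub_div_natCast c
  have hpow : Tendsto (fun n : ℕ => (1 - c / n) ^ n) atTop (𝓝 (Real.exp (-c))) := by
    simpa [← sub_eq_add_neg, neg_div] using Real.tendsto_one_add_div_pow_exp (-c)
  have hquot := hpow.div (by simpa using hbase.pow k) one_ne_zero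
  rw [div_one] at hquot
  refine hquot.congr' ?_
  filter_upwards [eventually_ge_atTop k, hbase.eventually (eventually_gt_nhds one_pos)]
    with n hkn hpos
  rw [Pi.div_apply, pow_sub₀ _ hpos.ne' hkn, div_eq_mul_inv]

lemma tendsto_descFactorial_mul_pow_div {ℓ : ℕ} (hℓ : 1 ≤ ℓ) (c : ℝ) (K : ℕ) :
    Tendsto (fun n : ℕ =>
        n.descFactorial ℓ * ((c / n) ^ (ℓ - 1) * (1 - c / n) ^ (ℓ * (n - ℓ) + K)) / n)
      atTop (𝓝 (c ^ (ℓ - 1) * Real.exp (-ℓ * c))) := by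
  have hlim := (((tendsto_descFactorial_div_pow ℓ).mul
    ((tendsto_one_sub_div_pow_sub c ℓ).pow ℓ)).mul
    ((tendsto_one_sub_div_natCast c).pow K)).const_mul (c ^ (ℓ - 1))
  rw [one_pow, one_mul, mul_one, ← Real.exp_nat_mul, mul_neg, ← neg_mul] at hlim
  refine hlim.congr' ?_
  filter_upwards [eventually_gt_atTop 0] with n hn
  have hn' : (n : ℝ) ≠ 0 := by positivity
  obtain ⟨k, rfl⟩ : ∃ k, ℓ = k + 1 := ⟨ℓ - 1, by omega⟩
  rw [Nat.add_sub_cancel, pow_add, ← pow_mul, mul_comm (n - (k + 1)), div_pow]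
  field_simp
  ring

end Limits

lemma SimpleGraph.ncard_edgeSet_le_choose_two {V : Type*} [Fintype V] (G : SimpleGraph V) :
    G.edgeSet.ncard ≤ (Fintype.card V).choose 2 := by
  classical
  rw [← coe_edgeFinset, Set.ncard_coe_finset]
  exact card_edgeFinset_le_card_choose_two

theorem gnp_expected_tree_components_general (ℓ : ℕ) (hℓ : 1 ≤ ℓ) (t : SimpleGraph (Fin ℓ))
    (htedges : t.edgeSet.ncard = ℓ - 1)
    (a : ℕ) (ha : Nat.card (t ≃g t) = a) (c : ℝ) :
    Tendsto (fun n : ℕ =>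
        gnpExp n (c / n)
          (fun g => (Nat.card {S : Finset (Fin n) // IsCompCopy t (graphOf g) S} : ℝ))
        / n)
      atTop
      (𝓝 ((ℓ.factorial / a) * c ^ (ℓ - 1) * Real.exp (-(ℓ : ℝ) * c) / ℓ.factorial)) := by
  have hedges_le : ℓ - 1 ≤ ℓ.choose 2 := by
    simpa [htedges] using t.ncard_edgeSet_le_choose_two
  have hlimit : (ℓ.factorial / a : ℝ) * c ^ (ℓ - 1) * Real.exp (-ℓ * c) / ℓ.factorial =
      c ^ (ℓ - 1) * Real.exp (-ℓ * c) / a := by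
    field_simp
  rw [hlimit]
  refine ((tendsto_descFactorial_mul_pow_div hℓ c (ℓ.choose 2 - (ℓ - 1))).div_const a).congr' ?_
  filter_upwards [eventually_ge_atTop ℓ] with n hn
  have hexponent :
      n.choose 2 - (n - ℓ).choose 2 - (ℓ - 1) = ℓ * (n - ℓ) + (ℓ.choose 2 - (ℓ - 1)) := by
    rw [Nat.choose_two_sub_choose_two_sub hn]
    omega
  rw [gnpExp_card_isCompCopy, htedges, hexponent, ha]
  ring

/-- for a fixed tree `t` with `ℓ` vertices and `a` automorphisms and a
constant `c > 0`, the expected number of components of `G(n, c/n)` isomorphic to `t`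
is asymptotically `(ℓ!/a)·c^{ℓ-1}·e^{-ℓc}·n/ℓ! = Θ(n)`. -/
theorem gnp_expected_tree_components (ℓ : ℕ) (hℓ : 1 ≤ ℓ) (t : SimpleGraph (Fin ℓ))
    (htconn : t.Connected) (htedges : t.edgeSet.ncard = ℓ - 1)
    (a : ℕ) (ha : Nat.card (t ≃g t) = a) (c : ℝ) (hc : 0 < c) :
    Tendsto (fun n : ℕ =>
        gnpExp n (c / n)
          (fun g => (Nat.card {S : Finset (Fin n) // IsCompCopy t (graphOf g) S} : ℝ))
        / n)
      atTop
      (𝓝 ((ℓ.factorial / a) * c ^ (ℓ - 1) * Real.exp (-(ℓ : ℝ) * c) / ℓ.factorial)) :=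
  gnp_expected_tree_components_general ℓ hℓ t htedges a ha c
end

section
/- Let T₁, T₂ be two rooted trees with roots φ₁, φ₂ having the same (m,k)-type. Then Duplicator wins the k-round distance-preserving Ehrenfeucht game DEHR[T₁|_m, T₂|_m, k] with designated pair (φ₁, φ₂): for every strategy of Spoiler selecting at most k vertices alternately from the truncated trees, Duplicator can respond so that the resulting pairs (including (φ₁,φ₂)) preserve parenthood, distances, and equality. -/
/-- An abstract rooted tree: a root together with the list of its principal branches. -/
inductive RTree : Type
  | node : List RTree → RTree

/-- `TreeType m k` is the set `Σ_{m,k}` of `(m,k)`-tree-types. -/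
def TreeType : ℕ → ℕ → Type
  | 0, _ => Unit
  | (m+1), k => TreeType m k → Fin (k+1)

/-- `trunc m T` is the truncation `T|_m` of `T` to depth `m`. -/
def trunc : ℕ → RTree → RTree
  | 0, _ => .node []
  | (m+1), .node cs => .node (cs.map (trunc m))

open Classical in
/-- The `(m,k)`-type of a rooted tree. -/
noncomputable def typeOf : (m : ℕ) → (k : ℕ) → RTree → TreeType m k
  | 0, _, _ => ()
  | (m+1), k, .node cs => fun σ =>
      ⟨min (cs.countP (fun c => decide (typeOf m k c = σ))) k,
        Nat.lt_succ_of_le (Nat.min_le_right _ _)⟩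

/-- `l` is (the address of) a vertex of the rooted tree `T`: the root is `[]`, and
`i :: l` is a vertex if `i` indexes a principal branch containing the vertex `l`. -/
def isVertex : List ℕ → RTree → Prop
  | [], _ => True
  | (i :: l), .node cs => ∃ h : i < cs.length, isVertex l (cs.get ⟨i, h⟩)

/-- The vertices of a rooted tree. -/
def Vtx (T : RTree) : Type := {l : List ℕ // isVertex l T}

/-- The root of a rooted tree. -/
def root (T : RTree) : Vtx T := ⟨[], trivial⟩

/-- `isParent u v` : the vertex `v` is the parent `π(u)` of the vertex `u`. -/
def isParent {T : RTree} (u v : Vtx T) : Prop :=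
  u.1 ≠ [] ∧ v.1 = u.1.dropLast

/-- Length of the longest common prefix of two vertex addresses. -/
def cpl : List ℕ → List ℕ → ℕ
  | (a :: as), (b :: bs) => if a = b then cpl as bs + 1 else 0
  | _, _ => 0

/-- The tree distance between two vertices (given by their addresses). -/
def treeDist (u v : List ℕ) : ℕ :=
  u.length + v.length - 2 * cpl u v

/-- The winning conditions of the distance-preserving Ehrenfeucht game, on the
configuration `C` of selected pairs: parenthood, distances and equality are preserved. -/
def DEHRok {V₁ V₂ : Type} (par₁ : V₁ → V₁ → Prop) (par₂ : V₂ → V₂ → Prop)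
    (d₁ : V₁ → V₁ → ℕ) (d₂ : V₂ → V₂ → ℕ) (C : List (V₁ × V₂)) : Prop :=
  ∀ p ∈ C, ∀ q ∈ C,
    (par₁ p.1 q.1 ↔ par₂ p.2 q.2) ∧ d₁ p.1 q.1 = d₂ p.2 q.2 ∧ (p.1 = q.1 ↔ p.2 = q.2)

/-- Duplicator wins the `r`-round distance-preserving Ehrenfeucht game with designated
pairs `C`: the configuration is winning, and for each of `r` rounds, whatever vertex
Spoiler picks in either structure, Duplicator can answer in the other keeping a
winnable configuration. -/
def DEHRWin {V₁ V₂ : Type} (par₁ : V₁ → V₁ → Prop) (par₂ : V₂ → V₂ → Prop)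
    (d₁ : V₁ → V₁ → ℕ) (d₂ : V₂ → V₂ → ℕ) : ℕ → List (V₁ × V₂) → Prop
  | 0, C => DEHRok par₁ par₂ d₁ d₂ C
  | (r+1), C => DEHRok par₁ par₂ d₁ d₂ C ∧
      (∀ x : V₁, ∃ y : V₂, DEHRWin par₁ par₂ d₁ d₂ r ((x, y) :: C)) ∧
      (∀ y : V₂, ∃ x : V₁, DEHRWin par₁ par₂ d₁ d₂ r ((x, y) :: C))

/-!
Duplicator keeps the selected pairs of addresses a type-respecting partial isomorphism:
paired addresses have pairwise equal common-prefix lengths, which determine lengths,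
parenthood, distances and equality, and corresponding prefixes carry subtrees of equal types
at the remaining depth. When Spoiler picks `x`, Duplicator takes the selected `a` sharing the
longest prefix `p` with `x`, goes to the partner `q` of `p`, leaves `q` through an unused child
of the same type as the child of `p` towards `x`, and copies the rest of `x` using equal types.
A type counts children of each type only up to `k`; since each round uses at most one new
child of any vertex, fewer than `k` are in use and a fresh child exists.
-/

theorem cpl_comm (u v : List ℕ) : cpl u v = cpl v u := by
  induction u generalizing v with
  | nil => cases v <;> rfl
  | cons a u ih =>
    cases v with
    | nil => rfl
    | cons b v =>
      simp only [cpl, ih, eq_comm (a := a)]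

theorem le_cpl_iff {n : ℕ} {u v : List ℕ} :
    n ≤ cpl u v ↔ n ≤ u.length ∧ n ≤ v.length ∧ u.take n = v.take n := by
  induction u generalizing v n with
  | nil => cases v <;> simp +contextual [cpl]
  | cons a u ih =>
    cases v with
    | nil => simp +contextual [cpl]
    | cons b v =>
      cases n with
      | zero => simp
      | succ n =>
        by_cases hab : a = b
        · simp [cpl, hab, ih]
        · simp [cpl, hab]

theorem cpl_le_length_left (u v : List ℕ) : cpl u v ≤ u.length :=
  (le_cpl_iff.mp le_rfl).1

theorem cpl_le_length_right (u v : List ℕ) : cpl u v ≤ v.length :=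
  (le_cpl_iff.mp le_rfl).2.1

theorem cpl_self (u : List ℕ) : cpl u u = u.length :=
  le_antisymm (cpl_le_length_left u u) (le_cpl_iff.mpr ⟨le_rfl, le_rfl, rfl⟩)

theorem cpl_eq_length_right_iff {u v : List ℕ} : cpl u v = v.length ↔ v <+: u := by
  rw [le_antisymm_iff, and_iff_right (cpl_le_length_right u v), le_cpl_iff,
    List.prefix_iff_eq_take, List.take_length]
  constructor
  · rintro ⟨-, -, h⟩
    exact h.symm
  · intro h
    exact ⟨h ▸ List.length_take_le' _ _, le_rfl, h.symm⟩

/-- Common prefix lengths form an ultrametric. -/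
theorem le_cpl_iff_of_le_cpl {n : ℕ} {u v w : List ℕ} (h : n ≤ cpl u v) :
    n ≤ cpl u w ↔ n ≤ cpl v w := by
  obtain ⟨hu, hv, huv⟩ := le_cpl_iff.mp h
  rw [le_cpl_iff, le_cpl_iff, huv]
  tauto

theorem ne_nil_and_eq_dropLast_iff {u v : List ℕ} :
    (u ≠ [] ∧ v = u.dropLast) ↔ (v.length + 1 = u.length ∧ cpl u v = v.length) := by
  rw [cpl_eq_length_right_iff]
  constructor
  · rintro ⟨hu, rfl⟩
    have : u.length ≠ 0 := by simpa using hu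
    exact ⟨by rw [List.length_dropLast]; omega, List.dropLast_prefix u⟩
  · rintro ⟨hlen, hvu⟩
    refine ⟨by rintro rfl; simp at hlen, ?_⟩
    rw [List.prefix_iff_eq_take] at hvu
    rw [hvu, List.dropLast_eq_take]
    congr 1
    omega

theorem eq_iff_length_eq_and_cpl_eq_length {u v : List ℕ} :
    u = v ↔ (u.length = v.length ∧ cpl u v = v.length) := by
  rw [cpl_eq_length_right_iff]
  constructor
  · rintro rfl
    exact ⟨rfl, List.prefix_refl u⟩
  · rintro ⟨hlen, hvu⟩
    exact (hvu.eq_of_length hlen.symm).symm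

/-- Duplicator's answer `take c b ++ z` to `x`, where the selected pair `(a, b)` maximises
`c = cpl x a`, keeps common prefix lengths with any selected pair `(a', b')` provided `z`
leaves `take c b` through a child that `b'` does not use. -/
theorem cpl_take_append_eq {x a b a' b' z : List ℕ} (hab : a.length = b.length)
    (hab' : cpl a a' = cpl b b') (hmax : cpl x a' ≤ cpl x a)
    (hlen : x.length = cpl x a + z.length)
    (hfresh : ∀ j w, z = j :: w → b'.take (cpl x a + 1) ≠ b.take (cpl x a) ++ [j]) :
    cpl x a' = cpl (b.take (cpl x a) ++ z) b' := by
  set c := cpl x a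
  set y := b.take c ++ z
  have hcb : c ≤ b.length := hab ▸ cpl_le_length_right x a
  have hyb : c ≤ cpl y b :=
    le_cpl_iff.mpr ⟨by simp [y]; omega, hcb, by simp [y, hcb]⟩
  apply eq_of_forall_le_iff
  intro n
  by_cases hn : n ≤ c
  · rw [le_cpl_iff_of_le_cpl (hn : n ≤ cpl x a), hab', le_cpl_iff_of_le_cpl (hn.trans hyb)]
  · refine iff_of_false (by omega) fun h => ?_
    obtain ⟨hy, -, htake⟩ := le_cpl_iff.mp (show c + 1 ≤ cpl y b' by omega)
    cases z with
    | nil => simp [y] at hy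
    | cons j w =>
      apply hfresh j w rfl
      rw [← htake]
      simp [y, List.take_append, hcb]

theorem dehrOk_of_cpl_eq {T₁ T₂ : RTree} {C : List (Vtx T₁ × Vtx T₂)}
    (h : ∀ pr ∈ C, ∀ pr' ∈ C, cpl pr.1.1 pr'.1.1 = cpl pr.2.1 pr'.2.1) :
    DEHRok isParent isParent (fun u v => treeDist u.1 v.1) (fun u v => treeDist u.1 v.1) C := by
  intro pr hpr pr' hpr'
  have hlen : pr.1.1.length = pr.2.1.length := by
    rw [← cpl_self, ← cpl_self, h pr hpr pr hpr]
  have hlen' : pr'.1.1.length = pr'.2.1.length := by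
    rw [← cpl_self, ← cpl_self, h pr' hpr' pr' hpr']
  have hcpl := h pr hpr pr' hpr'
  refine ⟨?_, ?_, ?_⟩
  · simp only [isParent, ne_nil_and_eq_dropLast_iff, hlen, hlen', hcpl]
  · simp only [treeDist, hlen, hlen', hcpl]
  · rw [show pr.1 = pr'.1 ↔ pr.1.1 = pr'.1.1 from Subtype.ext_iff,
      show pr.2 = pr'.2 ↔ pr.2.1 = pr'.2.1 from Subtype.ext_iff]
    simp only [eq_iff_length_eq_and_cpl_eq_length, hlen, hlen', hcpl]

theorem dehrWin_of_backAndForth {V₁ V₂ : Type} {par₁ : V₁ → V₁ → Prop} {par₂ : V₂ → V₂ → Prop}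
    {d₁ : V₁ → V₁ → ℕ} {d₂ : V₂ → V₂ → ℕ} (I : ℕ → List (V₁ × V₂) → Prop)
    (hok : ∀ r C, I r C → DEHRok par₁ par₂ d₁ d₂ C)
    (hforth : ∀ r C, I (r + 1) C → ∀ x, ∃ y, I r ((x, y) :: C))
    (hback : ∀ r C, I (r + 1) C → ∀ y, ∃ x, I r ((x, y) :: C)) :
    ∀ {r C}, I r C → DEHRWin par₁ par₂ d₁ d₂ r C
  | 0, C, h => hok 0 C h
  | r + 1, C, h =>
    ⟨hok _ C h,
      fun x => (hforth r C h x).imp fun _ hy => dehrWin_of_backAndForth I hok hforth hback hy,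
      fun y => (hback r C h y).imp fun _ hx => dehrWin_of_backAndForth I hok hforth hback hx⟩

theorem List.countP_eq_card_filter_range {α : Type*} (l : List α) (p : α → Bool) (x : α) :
    l.countP p = ((Finset.range l.length).filter fun i => p (l.getD i x)).card := by
  induction l with
  | nil => simp
  | cons c cs ih =>
    rw [List.countP_cons, Finset.card_filter, List.length_cons, Finset.sum_range_succ', ih,
      Finset.card_filter]
    simp

namespace RTree

def kids : RTree → List RTree
  | node cs => cs

def child (T : RTree) (i : ℕ) : RTree := (kids T).getD i (node [])

/-- Junk (`node []` stands in for missing children) unless `l` is a vertex of `T`. -/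
def subtree : List ℕ → RTree → RTree
  | [], T => T
  | i :: l, T => subtree l (child T i)

theorem subtree_append (p u : List ℕ) (T : RTree) :
    subtree (p ++ u) T = subtree u (subtree p T) := by
  induction p generalizing T with
  | nil => rfl
  | cons i p ih => exact ih _

theorem isVertex_cons {i : ℕ} {l : List ℕ} {T : RTree} :
    isVertex (i :: l) T ↔ i < (kids T).length ∧ isVertex l (child T i) := by
  cases T with
  | node cs =>
    simp only [isVertex, kids, child]
    constructor
    · rintro ⟨hi, hl⟩
      exact ⟨hi, by rwa [List.getD_eq_getElem _ _ hi]⟩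
    · rintro ⟨hi, hl⟩
      exact ⟨hi, by rwa [List.getD_eq_getElem _ _ hi] at hl⟩

theorem isVertex_append {p u : List ℕ} {T : RTree} :
    isVertex (p ++ u) T ↔ isVertex p T ∧ isVertex u (subtree p T) := by
  induction p generalizing T with
  | nil => simp [isVertex, subtree]
  | cons i p ih => simp only [List.cons_append, isVertex_cons, ih, subtree, and_assoc]

theorem isVertex_take {l : List ℕ} {T : RTree} (h : isVertex l T) (n : ℕ) :
    isVertex (l.take n) T := by
  rw [← List.take_append_drop n l, isVertex_append] at h
  exact h.1

theorem isVertex_trunc_iff {l : List ℕ} {m : ℕ} {T : RTree} :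
    isVertex l (trunc m T) ↔ l.length ≤ m ∧ isVertex l T := by
  induction l generalizing m T with
  | nil => simp [isVertex]
  | cons i l ih =>
    cases m with
    | zero => simp [isVertex_cons, trunc, kids]
    | succ m =>
      cases T with
      | node cs =>
        simp only [isVertex_cons, trunc, kids, List.length_map, List.length_cons]
        constructor
        · rintro ⟨hi, hl⟩
          rw [child, kids, List.getD_eq_getElem _ _ (by simpa using hi), List.getElem_map,
            ih] at hl
          rw [child, kids, List.getD_eq_getElem _ _ hi]
          exact ⟨by omega, hi, hl.2⟩
        · rintro ⟨hlen, hi, hl⟩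
          rw [child, kids, List.getD_eq_getElem _ _ (by simpa using hi), List.getElem_map, ih]
          rw [child, kids, List.getD_eq_getElem _ _ hi] at hl
          exact ⟨hi, by omega, hl⟩

open Classical in
noncomputable def childrenOfType {d k : ℕ} (S : RTree) (σ : TreeType d k) : Finset ℕ :=
  (Finset.range (kids S).length).filter fun i => typeOf d k (child S i) = σ

open Classical in
theorem typeOf_succ_val (d k : ℕ) (S : RTree) (σ : TreeType d k) :
    (typeOf (d + 1) k S σ).val = min (childrenOfType S σ).card k := by
  cases S with
  | node cs =>
    simp only [typeOf, childrenOfType, child, kids, List.countP_eq_card_filter_range cs _ (node []),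
      decide_eq_true_eq]
    congr 2

/-- Types count children only up to `k`: this is where the number of rounds enters. -/
theorem exists_mem_childrenOfType_notMem {d k : ℕ} {S₁ S₂ : RTree}
    (h : typeOf (d + 1) k S₁ = typeOf (d + 1) k S₂) {σ : TreeType d k} {I J : Finset ℕ}
    (hI : I ⊆ childrenOfType S₁ σ) {i : ℕ} (hi : i ∈ childrenOfType S₁ σ) (hiI : i ∉ I)
    (hIk : I.card < k) (hJI : J.card ≤ I.card) :
    ∃ j ∈ childrenOfType S₂ σ, j ∉ J := by
  have hcard : I.card + 1 ≤ (childrenOfType S₁ σ).card := by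
    rw [← Finset.card_insert_of_notMem hiI]
    exact Finset.card_le_card (Finset.insert_subset hi hI)
  have hmin := congrArg Fin.val (congrFun h σ)
  rw [typeOf_succ_val, typeOf_succ_val] at hmin
  exact Finset.exists_mem_notMem_of_card_lt_card (by omega)

def TypesAlong (d k : ℕ) (S₁ S₂ : RTree) (u v : List ℕ) : Prop :=
  ∀ n ≤ u.length,
    typeOf (d - n) k (subtree (u.take n) S₁) = typeOf (d - n) k (subtree (v.take n) S₂)

section TypesAlong

variable {d k : ℕ} {S₁ S₂ : RTree} {u v : List ℕ}

theorem TypesAlong.symm (h : TypesAlong d k S₁ S₂ u v) (huv : u.length = v.length) :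
    TypesAlong d k S₂ S₁ v u :=
  fun n hn => (h n (huv ▸ hn)).symm

theorem TypesAlong.take (h : TypesAlong d k S₁ S₂ u v) (c : ℕ) :
    TypesAlong d k S₁ S₂ (u.take c) (v.take c) := by
  intro n hn
  rw [List.length_take] at hn
  rw [List.take_take, List.take_take, min_eq_left (by omega)]
  exact h n (by omega)

theorem TypesAlong.typeOf_eq (h : TypesAlong d k S₁ S₂ u v) (huv : u.length = v.length) :
    typeOf (d - u.length) k (subtree u S₁) = typeOf (d - u.length) k (subtree v S₂) := by
  have := h u.length le_rfl
  rwa [List.take_length, List.take_of_length_le (huv ▸ le_rfl : v.length ≤ u.length)] at this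

theorem TypesAlong.cons (h : typeOf (d + 1) k S₁ = typeOf (d + 1) k S₂) {i j : ℕ}
    (hc : TypesAlong d k (child S₁ i) (child S₂ j) u v) :
    TypesAlong (d + 1) k S₁ S₂ (i :: u) (j :: v) := by
  rintro (_ | n) hn
  · exact h
  · rw [show d + 1 - (n + 1) = d - n by omega]
    simp only [List.take_succ_cons, subtree]
    exact hc n (by simpa using hn)

theorem TypesAlong.append {p q : List ℕ} (h : TypesAlong d k S₁ S₂ p q) (hpq : p.length = q.length)
    (hc : TypesAlong (d - p.length) k (subtree p S₁) (subtree q S₂) u v) :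
    TypesAlong d k S₁ S₂ (p ++ u) (q ++ v) := by
  intro n hn
  by_cases hnp : n ≤ p.length
  · rw [List.take_append_of_le_length hnp, List.take_append_of_le_length (hpq ▸ hnp)]
    exact h n hnp
  · rw [List.take_append, List.take_append, List.take_of_length_le (l := p) (by omega),
      List.take_of_length_le (l := q) (by omega), subtree_append, subtree_append, ← hpq,
      show d - n = d - p.length - (n - p.length) by omega]
    exact hc _ (by simp at hn; omega)

end TypesAlong

theorem exists_typesAlong {k : ℕ} (hk : 0 < k) {u : List ℕ} :
    ∀ {d : ℕ} {S₁ S₂ : RTree}, typeOf d k S₁ = typeOf d k S₂ → isVertex u S₁ → u.length ≤ d →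
      ∃ v, isVertex v S₂ ∧ v.length = u.length ∧ TypesAlong d k S₁ S₂ u v := by
  induction u with
  | nil =>
    intro d S₁ S₂ h _ _
    refine ⟨[], trivial, rfl, ?_⟩
    intro n hn
    obtain rfl : n = 0 := by simpa using hn
    exact h
  | cons i u ih =>
    rintro (_ | d) S₁ S₂ h hu hd
    · simp at hd
    rw [isVertex_cons] at hu
    have hi : i ∈ childrenOfType S₁ (typeOf d k (child S₁ i)) := by
      simp [childrenOfType, hu.1]
    obtain ⟨j, hj, -⟩ := exists_mem_childrenOfType_notMem h (Finset.empty_subset _) hi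
      (Finset.notMem_empty i) (by simpa using hk) le_rfl
    simp only [childrenOfType, Finset.mem_filter, Finset.mem_range] at hj
    obtain ⟨v, hv, hlen, hvu⟩ := ih hj.2.symm hu.2 (by simpa using hd)
    exact ⟨j :: v, isVertex_cons.mpr ⟨hj.1, hv⟩, by simp [hlen], hvu.cons h⟩

end RTree

/-- Duplicator's invariant with `r` rounds to go. The root pair stays selected, so at most
`k - r` further pairs have been chosen. -/
structure SafeConfig (m k : ℕ) (T₁ T₂ : RTree) (r : ℕ)
    (C : List (Vtx (trunc m T₁) × Vtx (trunc m T₂))) : Prop where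
  root_mem : (root (trunc m T₁), root (trunc m T₂)) ∈ C
  length_add_le : C.length + r ≤ k + 1
  cpl_eq : ∀ pr ∈ C, ∀ pr' ∈ C, cpl pr.1.1 pr'.1.1 = cpl pr.2.1 pr'.2.1
  typesAlong : ∀ pr ∈ C, RTree.TypesAlong m k T₁ T₂ pr.1.1 pr.2.1

namespace SafeConfig

open RTree

variable {m k r : ℕ} {T₁ T₂ : RTree} {C : List (Vtx (trunc m T₁) × Vtx (trunc m T₂))}

theorem init (h : typeOf m k T₁ = typeOf m k T₂) :
    SafeConfig m k T₁ T₂ k [(root (trunc m T₁), root (trunc m T₂))] where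
  root_mem := List.mem_singleton_self _
  length_add_le := by simp [add_comm]
  cpl_eq := by simp [root]
  typesAlong := by
    intro pr hpr n hn
    rw [List.mem_singleton] at hpr
    subst hpr
    obtain rfl : n = 0 := by simpa [root] using hn
    exact h

theorem length_eq (hG : SafeConfig m k T₁ T₂ r C) {pr} (hpr : pr ∈ C) :
    pr.1.1.length = pr.2.1.length := by
  rw [← cpl_self, ← cpl_self, hG.cpl_eq _ hpr _ hpr]

theorem swap (hG : SafeConfig m k T₁ T₂ r C) : SafeConfig m k T₂ T₁ r (C.map Prod.swap) where
  root_mem := List.mem_map_of_mem hG.root_mem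
  length_add_le := by simpa using hG.length_add_le
  cpl_eq := by
    simp only [List.mem_map]
    rintro _ ⟨pr, hpr, rfl⟩ _ ⟨pr', hpr', rfl⟩
    exact (hG.cpl_eq _ hpr _ hpr').symm
  typesAlong := by
    simp only [List.mem_map]
    rintro _ ⟨pr, hpr, rfl⟩
    exact (hG.typesAlong _ hpr).symm (hG.length_eq hpr)

theorem take_eq_iff (hG : SafeConfig m k T₁ T₂ r C) {pr pr'} (hpr : pr ∈ C) (hpr' : pr' ∈ C)
    {n : ℕ} (hn : n ≤ pr.1.1.length) (hn' : n ≤ pr'.1.1.length) :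
    pr.1.1.take n = pr'.1.1.take n ↔ pr.2.1.take n = pr'.2.1.take n := by
  have h := hG.cpl_eq _ hpr _ hpr'
  have h₁ := le_cpl_iff (n := n) (u := pr.1.1) (v := pr'.1.1)
  have h₂ := le_cpl_iff (n := n) (u := pr.2.1) (v := pr'.2.1)
  rw [hG.length_eq hpr] at hn
  rw [hG.length_eq hpr'] at hn'
  simp only [hG.length_eq hpr, hG.length_eq hpr', hn, hn', true_and, h] at h₁ h₂
  rw [← h₁, h₂]

theorem typeOf_subtree_take_eq (hG : SafeConfig m k T₁ T₂ r C) {a b} (hab : (a, b) ∈ C)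
    {c d : ℕ} (hc : c ≤ a.1.length) (hd : m - c = d) :
    typeOf d k (subtree (a.1.take c) T₁) = typeOf d k (subtree (b.1.take c) T₂) := by
  have := ((hG.typesAlong _ hab).take c).typeOf_eq (by simp [hG.length_eq hab])
  rwa [List.length_take, min_eq_left hc, hd] at this

theorem exists_take_succ_fst (hG : SafeConfig m k T₁ T₂ r C) {a b} (hab : (a, b) ∈ C) {c d : ℕ}
    (hc : c ≤ a.1.length) (hd : m - c = d + 1) {σ : TreeType d k} {pr} (hpr : pr ∈ C) {j : ℕ}
    (hj : pr.2.1.take (c + 1) = b.1.take c ++ [j])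
    (hjσ : j ∈ childrenOfType (subtree (b.1.take c) T₂) σ) :
    ∃ i ∈ childrenOfType (subtree (a.1.take c) T₁) σ, pr.1.1.take (c + 1) = a.1.take c ++ [i] := by
  have hcb : c ≤ b.1.length := hG.length_eq hab ▸ hc
  have hlen : c < pr.1.1.length := by
    have := congrArg List.length hj
    simp only [List.length_take, List.length_append, List.length_singleton] at this
    rw [hG.length_eq hpr]
    omega
  have hpre : pr.1.1.take c = a.1.take c := by
    have := congrArg (List.take c) hj
    rw [List.take_take, min_eq_left (by omega), List.take_left' (by simp [hcb])] at this
    exact (hG.take_eq_iff hpr hab hlen.le hc).mpr this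
  have htake : pr.1.1.take (c + 1) = a.1.take c ++ [pr.1.1[c]] := by
    rw [List.take_add_one, hpre, List.getElem?_eq_getElem hlen, Option.toList_some]
  refine ⟨pr.1.1[c], ?_, htake⟩
  have hvtx := isVertex_take (isVertex_trunc_iff.mp pr.1.2).2 (c + 1)
  rw [htake, isVertex_append, isVertex_cons] at hvtx
  have htype := (hG.typesAlong _ hpr) (c + 1) hlen
  rw [htake, hj, subtree_append, subtree_append, show m - (c + 1) = d by omega] at htype
  simp only [childrenOfType, Finset.mem_filter, Finset.mem_range] at hjσ ⊢
  exact ⟨hvtx.2.1, htype.trans hjσ.2⟩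

/-- The children of `a.take c` used by `C` correspond type by type to those of `b.take c`,
and there are fewer than `k` of them. -/
theorem exists_fresh_child (hG : SafeConfig m k T₁ T₂ (r + 1) C) {a b} (hab : (a, b) ∈ C)
    {c d : ℕ} (hc : c ≤ a.1.length) (hd : m - c = d + 1) {σ : TreeType d k} {i : ℕ}
    (hi : i ∈ childrenOfType (subtree (a.1.take c) T₁) σ)
    (hfree : ∀ pr ∈ C, pr.1.1.take (c + 1) ≠ a.1.take c ++ [i]) :
    ∃ j ∈ childrenOfType (subtree (b.1.take c) T₂) σ,
      ∀ pr ∈ C, pr.2.1.take (c + 1) ≠ b.1.take c ++ [j] := by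
  classical
  set used₁ := (childrenOfType (subtree (a.1.take c) T₁) σ).filter
    fun i' => ∃ pr ∈ C, pr.1.1.take (c + 1) = a.1.take c ++ [i']
  set used₂ := (childrenOfType (subtree (b.1.take c) T₂) σ).filter
    fun j' => ∃ pr ∈ C, pr.2.1.take (c + 1) = b.1.take c ++ [j']
  have hused₁ : used₁.card < k := by
    have hroot := List.mem_toFinset.mpr hG.root_mem
    have hcard : used₁.card ≤ (C.toFinset.erase (root _, root _)).card := by
      refine Finset.card_le_card_of_forall_subsingleton
        (fun i' pr => pr.1.1.take (c + 1) = a.1.take c ++ [i']) ?_ ?_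
      · intro i' hi'
        obtain ⟨pr, hpr, htake⟩ := (Finset.mem_filter.mp hi').2
        refine ⟨pr, Finset.mem_erase.mpr ⟨?_, List.mem_toFinset.mpr hpr⟩, htake⟩
        rintro rfl
        simp [root] at htake
      · rintro pr - i₁ ⟨-, h₁⟩ i₂ ⟨-, h₂⟩
        simpa using h₁.symm.trans h₂
    rw [Finset.card_erase_of_mem hroot] at hcard
    have := List.toFinset_card_le C
    have := hG.length_add_le
    have := Finset.card_pos.mpr ⟨_, hroot⟩
    omega
  have hused : used₂.card ≤ used₁.card := by
    refine Finset.card_le_card_of_forall_subsingleton (fun j' i' => ∃ pr ∈ C,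
      pr.2.1.take (c + 1) = b.1.take c ++ [j'] ∧ pr.1.1.take (c + 1) = a.1.take c ++ [i']) ?_ ?_
    · intro j' hj'
      obtain ⟨hjσ, pr, hpr, hj⟩ := Finset.mem_filter.mp hj'
      obtain ⟨i', hi'σ, hi'⟩ := hG.exists_take_succ_fst hab hc hd hpr hj hjσ
      exact ⟨i', Finset.mem_filter.mpr ⟨hi'σ, pr, hpr, hi'⟩, pr, hpr, hj, hi'⟩
    · rintro i' - j₁ ⟨-, pr₁, hpr₁, hj₁, hi₁⟩ j₂ ⟨-, pr₂, hpr₂, hj₂, hi₂⟩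
      have hlen : ∀ {pr : Vtx (trunc m T₁) × Vtx (trunc m T₂)},
          pr.1.1.take (c + 1) = a.1.take c ++ [i'] → c + 1 ≤ pr.1.1.length :=
        fun h => by simpa [hc] using congrArg List.length h
      have := (hG.take_eq_iff hpr₁ hpr₂ (hlen hi₁) (hlen hi₂)).mp (hi₁.trans hi₂.symm)
      simpa [hj₁, hj₂] using this
  obtain ⟨j, hj, hjused⟩ := exists_mem_childrenOfType_notMem
    (hG.typeOf_subtree_take_eq hab hc hd) (Finset.filter_subset _ _) hi
    (fun h => (Finset.mem_filter.mp h).2.elim fun pr ⟨hpr, h⟩ => hfree pr hpr h) hused₁ hused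
  exact ⟨j, hj, fun pr hpr h => hjused (Finset.mem_filter.mpr ⟨hj, pr, hpr, h⟩)⟩

theorem exists_branch_of_lt (hG : SafeConfig m k T₁ T₂ (r + 1) C) {a b} (hab : (a, b) ∈ C)
    (x : Vtx (trunc m T₁)) (hmax : ∀ pr ∈ C, cpl x.1 pr.1.1 ≤ cpl x.1 a.1)
    (hlt : cpl x.1 a.1 < x.1.length) :
    ∃ z, isVertex (b.1.take (cpl x.1 a.1) ++ z) (trunc m T₂) ∧
      x.1.length = cpl x.1 a.1 + z.length ∧
      (∀ j w, z = j :: w →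
        ∀ pr ∈ C, pr.2.1.take (cpl x.1 a.1 + 1) ≠ b.1.take (cpl x.1 a.1) ++ [j]) ∧
      TypesAlong m k T₁ T₂ x.1 (b.1.take (cpl x.1 a.1) ++ z) := by
  set c := cpl x.1 a.1
  obtain ⟨hxm, hx⟩ := isVertex_trunc_iff.mp x.2
  have hca : c ≤ a.1.length := cpl_le_length_right _ _
  have hcb : c ≤ b.1.length := hG.length_eq hab ▸ hca
  obtain ⟨i, u, hiu⟩ : ∃ i u, x.1.drop c = i :: u :=
    List.ne_nil_iff_exists_cons.mp (by simpa using hlt)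
  have hx' : x.1 = a.1.take c ++ i :: u := by
    rw [← (le_cpl_iff.mp le_rfl).2.2, ← hiu, List.take_append_drop]
  have hxi : x.1.take (c + 1) = a.1.take c ++ [i] := by
    rw [hx']
    simp [List.take_append, hca]
  obtain ⟨d, hd⟩ : ∃ d, m - c = d + 1 := ⟨m - c - 1, by omega⟩
  rw [hx', isVertex_append, isVertex_cons] at hx
  have hi : i ∈ childrenOfType (subtree (a.1.take c) T₁)
      (typeOf d k (child (subtree (a.1.take c) T₁) i)) := by
    simp [childrenOfType, hx.2.1]
  obtain ⟨j, hj, hjfree⟩ := hG.exists_fresh_child hab hca hd hi fun pr hpr h =>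
    absurd (hmax pr hpr) <| Nat.not_le.mpr <| le_cpl_iff.mpr
      ⟨hlt, by simpa [hca] using congrArg List.length h, hxi.trans h.symm⟩
  simp only [childrenOfType, Finset.mem_filter, Finset.mem_range] at hj
  have hk : 0 < k := by
    have := hG.length_add_le
    have := List.length_pos_of_mem hG.root_mem
    omega
  obtain ⟨v, hv, hvlen, hvTA⟩ := exists_typesAlong hk hj.2.symm hx.2.2
    (by rw [hx'] at hxm; simp at hxm; omega)
  rw [hx'] at hxm ⊢
  refine ⟨j :: v, ?_, by simp [hvlen, hca], fun j' w h => (List.cons.inj h).1 ▸ hjfree, ?_⟩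
  · refine isVertex_trunc_iff.mpr ⟨by simpa [hvlen, hca, hcb] using hxm,
      isVertex_append.mpr ⟨isVertex_take (isVertex_trunc_iff.mp b.2).2 c,
        isVertex_cons.mpr ⟨hj.1, hv⟩⟩⟩
  · refine ((hG.typesAlong _ hab).take c).append (by simp [hca, hcb]) ?_
    rw [List.length_take, min_eq_left hca, hd]
    exact hvTA.cons (hG.typeOf_subtree_take_eq hab hca hd)

/-- Duplicator's answer to `x`: follow `b` as long as `x` follows `a`, then leave through a
fresh child of the right type and copy the rest of `x` by types. -/
theorem exists_branch (hG : SafeConfig m k T₁ T₂ (r + 1) C) {a b} (hab : (a, b) ∈ C)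
    (x : Vtx (trunc m T₁)) (hmax : ∀ pr ∈ C, cpl x.1 pr.1.1 ≤ cpl x.1 a.1) :
    ∃ z, isVertex (b.1.take (cpl x.1 a.1) ++ z) (trunc m T₂) ∧
      x.1.length = cpl x.1 a.1 + z.length ∧
      (∀ j w, z = j :: w →
        ∀ pr ∈ C, pr.2.1.take (cpl x.1 a.1 + 1) ≠ b.1.take (cpl x.1 a.1) ++ [j]) ∧
      TypesAlong m k T₁ T₂ x.1 (b.1.take (cpl x.1 a.1) ++ z) := by
  obtain hlt | heq := (cpl_le_length_left x.1 a.1).lt_or_eq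
  · exact hG.exists_branch_of_lt hab x hmax hlt
  have hx : x.1 = a.1.take (cpl x.1 a.1) := by
    rw [← (le_cpl_iff.mp le_rfl).2.2, heq, List.take_length]
  have hxm := (isVertex_trunc_iff.mp x.2).1
  refine ⟨[], ?_, by simp [heq], by simp, ?_⟩
  · exact isVertex_trunc_iff.mpr
      ⟨by simp; omega, by simpa using isVertex_take (isVertex_trunc_iff.mp b.2).2 _⟩
  · have h : TypesAlong m k T₁ T₂ (a.1.take (cpl x.1 a.1)) (b.1.take (cpl x.1 a.1)) :=
      (hG.typesAlong _ hab).take _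
    rw [List.append_nil]
    rwa [← hx] at h

theorem cons (hG : SafeConfig m k T₁ T₂ (r + 1) C) {a b} (hab : (a, b) ∈ C)
    {x : Vtx (trunc m T₁)} {y : Vtx (trunc m T₂)} (hmax : ∀ pr ∈ C, cpl x.1 pr.1.1 ≤ cpl x.1 a.1)
    {z : List ℕ} (hy : y.1 = b.1.take (cpl x.1 a.1) ++ z)
    (hlen : x.1.length = cpl x.1 a.1 + z.length)
    (hfresh : ∀ j w, z = j :: w →
      ∀ pr ∈ C, pr.2.1.take (cpl x.1 a.1 + 1) ≠ b.1.take (cpl x.1 a.1) ++ [j])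
    (hTA : TypesAlong m k T₁ T₂ x.1 y.1) :
    SafeConfig m k T₁ T₂ r ((x, y) :: C) where
  root_mem := List.mem_cons_of_mem _ hG.root_mem
  length_add_le := by
    have := hG.length_add_le
    simp only [List.length_cons]
    omega
  cpl_eq := by
    have hnew : ∀ pr ∈ C, cpl x.1 pr.1.1 = cpl y.1 pr.2.1 := fun pr hpr => hy ▸
      cpl_take_append_eq (hG.length_eq hab) (hG.cpl_eq _ hab _ hpr) (hmax _ hpr) hlen
        fun j w h => hfresh j w h pr hpr
    have hxy : x.1.length = y.1.length := by
      have := hG.length_eq hab ▸ cpl_le_length_right x.1 a.1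
      rw [hy, hlen]
      simp [this]
    rintro pr (_ | ⟨_, hpr⟩) pr' (_ | ⟨_, hpr'⟩)
    · simp [cpl_self, hxy]
    · exact hnew _ hpr'
    · rw [cpl_comm, hnew _ hpr, cpl_comm]
    · exact hG.cpl_eq _ hpr _ hpr'
  typesAlong := by
    rintro pr (_ | ⟨_, hpr⟩)
    exacts [hTA, hG.typesAlong _ hpr]

theorem forth (hG : SafeConfig m k T₁ T₂ (r + 1) C) (x : Vtx (trunc m T₁)) :
    ∃ y, SafeConfig m k T₁ T₂ r ((x, y) :: C) := by
  classical
  obtain ⟨⟨a, b⟩, hab, hmax⟩ := C.toFinset.exists_max_image (fun pr => cpl x.1 pr.1.1)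
    ⟨_, List.mem_toFinset.mpr hG.root_mem⟩
  rw [List.mem_toFinset] at hab
  replace hmax : ∀ pr ∈ C, cpl x.1 pr.1.1 ≤ cpl x.1 a.1 :=
    fun pr hpr => hmax pr (List.mem_toFinset.mpr hpr)
  obtain ⟨z, hy, hlen, hfresh, hTA⟩ := hG.exists_branch hab x hmax
  exact ⟨⟨_, hy⟩, hG.cons hab hmax rfl hlen hfresh hTA⟩

theorem back (hG : SafeConfig m k T₁ T₂ (r + 1) C) (y : Vtx (trunc m T₂)) :
    ∃ x, SafeConfig m k T₁ T₂ r ((x, y) :: C) := by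
  obtain ⟨x, hx⟩ := hG.swap.forth y
  refine ⟨x, ?_⟩
  simpa [List.map_map, Prod.swap_swap_eq] using hx.swap

end SafeConfig

/-- if two rooted trees `T₁, T₂` have the same `(m,k)`-type, then
Duplicator wins the `k`-round distance-preserving Ehrenfeucht game
`DEHR[T₁|_m, T₂|_m, k]` with the designated pair of roots `(φ₁, φ₂)`. -/
theorem dehr_win_same_type (m k : ℕ) (T₁ T₂ : RTree)
    (h : typeOf m k T₁ = typeOf m k T₂) :
    DEHRWin (V₁ := Vtx (trunc m T₁)) (V₂ := Vtx (trunc m T₂))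
      isParent isParent
      (fun u v => treeDist u.1 v.1) (fun u v => treeDist u.1 v.1)
      k [(root (trunc m T₁), root (trunc m T₂))] :=
  dehrWin_of_backAndForth (SafeConfig m k T₁ T₂) (fun _ _ hG => dehrOk_of_cpl_eq hG.cpl_eq)
    (fun _ _ hG => hG.forth) (fun _ _ hG => hG.back) (SafeConfig.init h)
end
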